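/- For each n with 1 ≤ n ≤ p, the hyperplane H_n separates the chambers x₁C and e_{n−1}C. -/

import Mathlib

/-!
Let `α = α_{s_{i_n}}`, so that `H_n = H_{x_n α}`. Both sides rest on the classical fact that
`w α_s ≥ 0` when `ℓ(w s) > ℓ(w)` and `w α_s ≤ 0` otherwise (Humphreys, *Reflection groups and
Coxeter groups*, Thm. 5.4), proved by splitting `w = v u` with `u` in the dihedral subgroup
`⟨s, t⟩`, `v` without right descents in `{s, t}`, and computing `u α_s` explicitly.

On `x₁C`: `x₁⁻¹ x_n = s_{i₁} ⋯ s_{i_n − 1}`, and this word followed by `s_{i_n}` is a factor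
of the reduced word for `y`, so `x₁⁻¹ x_n α > 0`. On `e_{n−1}C`: the reflection `σ_r` deletes the
letter `s_{i_r}`, hence `e_{n−1}⁻¹ x_n = x′_n`, and `s_{i_n}` is a right descent of `x′_n`, so
`x′_n α < 0`.
-/

noncomputable section

namespace PaperBound

variable {B : Type} {W : Type} [Group W]

/-- The value `B(α_i, α_j)` of the canonical symmetric bilinear form on simple roots:
`-cos (π / m i j)` if `m i j ≠ ∞` (encoded as `M i j ≠ 0`) and `-1` otherwise. -/
def cB (M : CoxeterMatrix B) (i j : B) : ℝ :=
  if M i j = 0 then -1 else - Real.cos (Real.pi / (M i j : ℝ))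

/-- The canonical symmetric bilinear form on `V = B → ℝ` (coordinates in the basis of
simple roots `Δ = {α_i}`). -/
def bform [Fintype B] (M : CoxeterMatrix B) (u v : B → ℝ) : ℝ :=
  ∑ i, ∑ j, u i * v j * cB M i j

/-- The natural pairing `⟨-,-⟩ : V* × V → ℝ`, where both `V` and `V*` are modelled as
`B → ℝ` (coordinates of `V*` taken in the dual basis of `Δ`). -/
def pair [Fintype B] (f v : B → ℝ) : ℝ := ∑ i, f i * v i

/-- The simple root `α_i ∈ V`. -/
def sroot [DecidableEq B] (i : B) : B → ℝ := Pi.single i 1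

/-- `ρ` is the geometric representation of `W` on `V = B → ℝ`:
`s_i · v = v - 2 B(α_i, v) α_i`. -/
def IsGeomRep [Fintype B] [DecidableEq B] (M : CoxeterMatrix B) (cs : CoxeterSystem M W)
    (ρ : W →* (B → ℝ) ≃ₗ[ℝ] (B → ℝ)) : Prop :=
  ∀ (i : B) (v : B → ℝ), ρ (cs.simple i) v = v - (2 * bform M (sroot i) v) • sroot i

/-- `π` is the contragredient representation of `W` on `V* = B → ℝ`:
`⟨w·f, w·v⟩ = ⟨f, v⟩`. -/
def IsContraRep [Fintype B] (ρ : W →* (B → ℝ) ≃ₗ[ℝ] (B → ℝ))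
    (π : W →* (B → ℝ) ≃ₗ[ℝ] (B → ℝ)) : Prop :=
  ∀ (w : W) (f v : B → ℝ), pair (π w f) (ρ w v) = pair f v

/-- The set `Φ⁺` of positive roots: roots (elements of the orbit of the simple roots)
all of whose coordinates in the basis `Δ` are nonnegative. -/
def PhiPos [Fintype B] [DecidableEq B] (ρ : W →* (B → ℝ) ≃ₗ[ℝ] (B → ℝ)) : Set (B → ℝ) :=
  {α | (∃ (w : W) (i : B), α = ρ w (sroot i)) ∧ ∀ j, 0 ≤ α j}

/-- The hyperplane `H_α = {f ∈ V* : ⟨f, α⟩ = 0}`. -/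
def hyp [Fintype B] (α : B → ℝ) : Set (B → ℝ) := {f | pair f α = 0}

/-- The set `𝔓 = {H_α : α ∈ Φ⁺}` of hyperplanes. -/
def Planes [Fintype B] [DecidableEq B] (ρ : W →* (B → ℝ) ≃ₗ[ℝ] (B → ℝ)) :
    Set (Set (B → ℝ)) :=
  {H | ∃ α ∈ PhiPos (W := W) ρ, H = hyp α}

/-- The (open) dominant chamber `C = {f ∈ V* : ⟨f, α_i⟩ > 0 for all i}`. -/
def domCham (B : Type) [Fintype B] [DecidableEq B] : Set (B → ℝ) :=
  {f | ∀ i : B, 0 < pair f (sroot i)}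

/-- The Tits cone `U = ⋃_{w ∈ W} w · (closure of C)`. -/
def titsCone [Fintype B] [DecidableEq B] (π : W →* (B → ℝ) ≃ₗ[ℝ] (B → ℝ)) :
    Set (B → ℝ) :=
  ⋃ w : W, (π w) '' closure (domCham B)

/-- `A ⩀ B := A ∩ B ∩ U°`, where `U°` is the interior of the Tits cone. -/
def dcap [Fintype B] [DecidableEq B] (π : W →* (B → ℝ) ≃ₗ[ℝ] (B → ℝ))
    (A A' : Set (B → ℝ)) : Set (B → ℝ) :=
  A ∩ A' ∩ interior (titsCone π)

/-- A set `𝔔` of hyperplanes is intersecting if `H₁ ⩀ H₂ ≠ ∅` for all `H₁, H₂ ∈ 𝔔`. -/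
def Intersecting [Fintype B] [DecidableEq B] (π : W →* (B → ℝ) ≃ₗ[ℝ] (B → ℝ))
    (Q : Set (Set (B → ℝ))) : Prop :=
  ∀ H₁ ∈ Q, ∀ H₂ ∈ Q, (dcap π H₁ H₂).Nonempty

/-- The chamber `wC ⊆ V*`. -/
def cham [Fintype B] [DecidableEq B] (π : W →* (B → ℝ) ≃ₗ[ℝ] (B → ℝ)) (w : W) :
    Set (B → ℝ) :=
  (π w) '' domCham B

/-- The hyperplane with root `α` separates `f, g ∈ V*`: `⟨f, α⟩⟨g, α⟩ < 0`. -/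
def SepPt [Fintype B] (α f g : B → ℝ) : Prop := pair f α * pair g α < 0

/-- The hyperplane with root `α` separates the subsets `A, A'` of `V*`: every point of
`A ∪ A'` lies off the hyperplane, and every point of `A` is separated from every point
of `A'`. -/
def SepSets [Fintype B] (α : B → ℝ) (A A' : Set (B → ℝ)) : Prop :=
  (∀ f ∈ A ∪ A', pair f α ≠ 0) ∧ ∀ f ∈ A, ∀ g ∈ A', SepPt α f g

/-- The subset `A ⊆ V*` lies entirely on one side of the hyperplane with root `α`. -/
def OneSide [Fintype B] (α : B → ℝ) (A : Set (B → ℝ)) : Prop :=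
  (∀ f ∈ A, pair f α ≠ 0) ∧ ∀ f ∈ A, ∀ g ∈ A, ¬ SepPt α f g

/-- The hyperplane `H ∈ 𝔓` separates the subsets `A, A'` of `V*` (expressed via a
positive root `α` with `H = H_α`; this does not depend on the choice of `α`). -/
def SepSetsH [Fintype B] [DecidableEq B] (ρ : W →* (B → ℝ) ≃ₗ[ℝ] (B → ℝ))
    (H : Set (B → ℝ)) (A A' : Set (B → ℝ)) : Prop :=
  ∃ α ∈ PhiPos (W := W) ρ, H = hyp α ∧ SepSets α A A'


/-- The open half-space bounded by the hyperplane with root `α` on the side not containing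
the chamber `wC`. -/
def halfNeg [Fintype B] [DecidableEq B] (π : W →* (B → ℝ) ≃ₗ[ℝ] (B → ℝ)) (w : W)
    (α : B → ℝ) : Set (B → ℝ) :=
  {f | ∀ f₀ ∈ cham π w, pair f α * pair f₀ α < 0}

/-- Auxiliary recursion producing the sets `𝔄_i` (first component) together with the
cumulative unions `𝔄₀ ∪ ⋯ ∪ 𝔄_i` (second component), starting from `𝔄₀ = A0`:
`𝔄_{i+1} = {P ∈ Q ∖ (𝔄₀ ∪ ⋯ ∪ 𝔄_i) : P ⩀ σ(R) = ∅ for some R ∈ 𝔄_i}`. -/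
def AseqAux [Fintype B] [DecidableEq B] (π : W →* (B → ℝ) ≃ₗ[ℝ] (B → ℝ))
    (Q : Set (Set (B → ℝ))) (σ : W) (A0 : Set (Set (B → ℝ))) :
    ℕ → Set (Set (B → ℝ)) × Set (Set (B → ℝ))
  | 0 => (A0, A0)
  | i + 1 =>
    let prev := AseqAux π Q σ A0 i
    ({P | P ∈ Q ∧ P ∉ prev.2 ∧ ∃ R ∈ prev.1, dcap π P ((π σ) '' R) = ∅},
      prev.2 ∪ {P | P ∈ Q ∧ P ∉ prev.2 ∧ ∃ R ∈ prev.1, dcap π P ((π σ) '' R) = ∅})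

/-- The set `𝔄_i`. -/
def Aseq [Fintype B] [DecidableEq B] (π : W →* (B → ℝ) ≃ₗ[ℝ] (B → ℝ))
    (Q : Set (Set (B → ℝ))) (σ : W) (A0 : Set (Set (B → ℝ))) (i : ℕ) :
    Set (Set (B → ℝ)) :=
  (AseqAux π Q σ A0 i).1

section Words

variable {M : CoxeterMatrix B}

/-- The element `x′_n = x s₁ ⋯ ŝ_{i₁} ⋯ ŝ_{i_{n−1}} ⋯ s_{i_n − 1}`: the product of `x` and
the first `i_n - 1` letters of the word `ω`, with the letters at positions `i₁, …, i_{n−1}`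
omitted. (Positions are recorded `0`-based: the index `ι n : Fin ω.length` corresponds to
the letter `s_{i_{n+1}}` of the paper.) -/
def omitProd (cs : CoxeterSystem M W) (x : W) (ω : List B) {p : ℕ}
    (ι : Fin p → Fin ω.length) (n : Fin p) : W :=
  x * cs.wordProd (((List.finRange ω.length).filter
      (fun j : Fin ω.length => decide ((j : ℕ) < (ι n : ℕ) ∧ ∀ m : Fin p, m < n → j ≠ ι m))).map ω.get)

/-- The condition `ℓ(x′_n s_{i_n}) < ℓ(x′_n)` for all `n = 1, …, p`. -/
def DescCond (cs : CoxeterSystem M W) (x : W) (ω : List B) {p : ℕ}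
    (ι : Fin p → Fin ω.length) : Prop :=
  ∀ n : Fin p, cs.length (omitProd cs x ω ι n * cs.simple (ω.get (ι n))) <
    cs.length (omitProd cs x ω ι n)

/-- The element `x_n := x s₁ ⋯ s_{i_n − 1}`. -/
def xseq (cs : CoxeterSystem M W) (x : W) (ω : List B) {p : ℕ}
    (ι : Fin p → Fin ω.length) (n : Fin p) : W :=
  x * cs.wordProd (ω.take (ι n))

/-- The reflection `σ_n := x_n s_{i_n} x_n⁻¹`. -/
def sigmaseq (cs : CoxeterSystem M W) (x : W) (ω : List B) {p : ℕ}
    (ι : Fin p → Fin ω.length) (n : Fin p) : W :=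
  xseq cs x ω ι n * cs.simple (ω.get (ι n)) * (xseq cs x ω ι n)⁻¹

/-- The element `e_n := σ_n σ_{n−1} ⋯ σ₁`, with `e₀ = e`. -/
def eseq (cs : CoxeterSystem M W) (x : W) (ω : List B) {p : ℕ}
    (ι : Fin p → Fin ω.length) : ℕ → W
  | 0 => 1
  | n + 1 => (if h : n < p then sigmaseq cs x ω ι ⟨n, h⟩ else 1) * eseq cs x ω ι n

/-- A root of the hyperplane `H_n` corresponding to the reflection `σ_n`, namely
`x_n · α_{s_{i_n}}`. -/
def rootseq [Fintype B] [DecidableEq B] (cs : CoxeterSystem M W)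
    (ρ : W →* (B → ℝ) ≃ₗ[ℝ] (B → ℝ)) (x : W) (ω : List B) {p : ℕ}
    (ι : Fin p → Fin ω.length) (n : Fin p) : B → ℝ :=
  ρ (xseq cs x ω ι n) (sroot (ω.get (ι n)))

/-- The hyperplane `H_n ∈ 𝔓` corresponding to the reflection `σ_n`. -/
def Hseq [Fintype B] [DecidableEq B] (cs : CoxeterSystem M W)
    (ρ : W →* (B → ℝ) ≃ₗ[ℝ] (B → ℝ)) (x : W) (ω : List B) {p : ℕ}
    (ι : Fin p → Fin ω.length) (n : Fin p) : Set (B → ℝ) :=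
  hyp (rootseq cs ρ x ω ι n)

end Words

open CoxeterSystem (alternatingWord)

section Subwords

variable {M : CoxeterMatrix B} (cs : CoxeterSystem M W)

def subwordProd : List B → (ℕ → Bool) → W
  | [], _ => 1
  | i :: ω, keep => (if keep 0 then cs.simple i else 1) * subwordProd ω (keep ∘ Nat.succ)

theorem subwordProd_lt (ω : List B) (j : ℕ) :
    subwordProd cs ω (fun k => decide (k < j)) = cs.wordProd (ω.take j) := by
  induction ω generalizing j with
  | nil => simp [subwordProd]
  | cons i ω ih =>
    cases j with
    | zero => simpa [subwordProd] using ih 0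
    | succ j => simp [subwordProd, Function.comp_def, ← ih j, cs.wordProd_cons]

theorem wordProd_filter_finRange (ω : List B) (keep : ℕ → Bool) :
    cs.wordProd (((List.finRange ω.length).filter (fun j : Fin ω.length => keep j)).map ω.get) =
      subwordProd cs ω keep := by
  induction ω generalizing keep with
  | nil => simp [subwordProd]
  | cons i ω ih =>
    simp only [List.length_cons, List.finRange_succ, List.filter_cons, List.filter_map,
      subwordProd, ← ih]
    cases h : keep 0 <;> simp [h, List.map_map, Function.comp_def, cs.wordProd_cons] <;> rfl

theorem wordProd_take_conj_mul_subwordProd (ω : List B) (keep : ℕ → Bool) (j : ℕ)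
    (hj : j < ω.length) (hkeep : ∀ k ≤ j, keep k) :
    cs.wordProd (ω.take j) * cs.simple ω[j] * (cs.wordProd (ω.take j))⁻¹ *
        subwordProd cs ω keep =
      subwordProd cs ω (fun k => keep k && k != j) := by
  induction ω generalizing j keep with
  | nil => simp at hj
  | cons i ω ih =>
    cases j with
    | zero =>
      simp [subwordProd, hkeep 0 le_rfl, Function.comp_def, ← mul_assoc]
    | succ j =>
      have := ih (keep ∘ Nat.succ) j (by simpa using hj) (fun k hk => hkeep _ (by omega))
      simp only [Function.comp_def] at this
      simp [subwordProd, hkeep 0 (by omega), Function.comp_def, cs.wordProd_cons, mul_assoc,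
        ← this]

end Subwords

section Sequences

variable {M : CoxeterMatrix B} (cs : CoxeterSystem M W) (x : W) (ω : List B) {p : ℕ}
  (ι : Fin p → Fin ω.length)

theorem sigmaseq_inv (n : Fin p) : (sigmaseq cs x ω ι n)⁻¹ = sigmaseq cs x ω ι n :=
  CoxeterSystem.IsReflection.inv ⟨_, _, rfl⟩

theorem eseq_succ_inv {r : ℕ} (hr : r < p) :
    (eseq cs x ω ι (r + 1))⁻¹ = (eseq cs x ω ι r)⁻¹ * sigmaseq cs x ω ι ⟨r, hr⟩ := by
  rw [eseq, dif_pos hr, mul_inv_rev, sigmaseq_inv]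

theorem omitProd_eq_subwordProd (n : Fin p) :
    omitProd cs x ω ι n = x * subwordProd cs ω
      (fun k => decide (k < ι n ∧ ∀ m : Fin p, m < n → k ≠ ι m)) := by
  rw [omitProd, ← wordProd_filter_finRange]
  congr 3
  refine List.filter_congr fun j _ => decide_eq_decide.mpr ?_
  simp [Fin.ext_iff]

theorem eseq_inv_mul_xseq (hι : StrictMono ι) (n : Fin p) :
    (eseq cs x ω ι n)⁻¹ * xseq cs x ω ι n = omitProd cs x ω ι n := by
  -- `keep r` selects `ω.take (ι n)` with the letters at positions `ι r, …, ι (n - 1)` deleted;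
  -- passing from `r + 1` to `r`, the reflection `σ_r` deletes the letter at `ι r`.
  let keep (r : ℕ) (k : ℕ) : Bool :=
    decide (k < ι n ∧ ∀ m : Fin p, r ≤ (m : ℕ) → m < n → k ≠ ι m)
  have hstep : ∀ r ≤ (n : ℕ),
      (eseq cs x ω ι r)⁻¹ * (x * subwordProd cs ω (keep r)) = x * subwordProd cs ω (keep 0) := by
    intro r
    induction r with
    | zero => simp [eseq]
    | succ r ih =>
      intro hr
      have hrp : r < p := by omega
      have hιr : ι ⟨r, hrp⟩ < ι n := hι (Fin.mk_lt_of_lt_val hr)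
      have hdel := wordProd_take_conj_mul_subwordProd cs ω (keep (r + 1)) (ι ⟨r, hrp⟩)
        (ι ⟨r, hrp⟩).isLt fun k hk => by
          simp only [keep, decide_eq_true_eq]
          refine ⟨by omega, fun m hm _ => ?_⟩
          have : ι ⟨r, hrp⟩ < ι m := hι (Fin.mk_lt_of_lt_val hm)
          omega
      have hkeep : (fun k => keep (r + 1) k && k != ι ⟨r, hrp⟩) = keep r := by
        ext k
        rw [Bool.eq_iff_iff]
        simp only [keep, Bool.and_eq_true, decide_eq_true_eq, bne_iff_ne]
        constructor
        · rintro ⟨⟨hk, hkeep⟩, hkr⟩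
          refine ⟨hk, fun m hrm hmn => ?_⟩
          rcases hrm.eq_or_lt with hrm | hrm
          · rwa [show m = ⟨r, hrp⟩ from Fin.ext hrm.symm]
          · exact hkeep m hrm hmn
        · rintro ⟨hk, hkeep⟩
          exact ⟨⟨hk, fun m hrm hmn => hkeep m (by omega) hmn⟩,
            hkeep ⟨r, hrp⟩ le_rfl (Fin.mk_lt_of_lt_val hr)⟩
      rw [eseq_succ_inv cs x ω ι hrp, ← ih (by omega), sigmaseq, xseq, ← hkeep, ← hdel]
      simp only [List.get_eq_getElem, mul_inv_rev, mul_assoc, inv_mul_cancel_left]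
  have hfull : keep n = fun k => decide (k < (ι n : ℕ)) := by
    ext k
    simp only [keep, decide_eq_decide]
    exact ⟨And.left, fun hk => ⟨hk, fun m hm hmn => absurd hmn (by omega)⟩⟩
  have hzero : keep 0 = fun k : ℕ => decide (k < ι n ∧ ∀ m : Fin p, m < n → k ≠ ι m) := by
    ext k
    simp [keep]
  rw [omitProd_eq_subwordProd, ← hzero, ← hstep n le_rfl, hfull, subwordProd_lt, xseq]

theorem xseq_eq_xseq_mul (hι : Monotone ι) {m n : Fin p} (hmn : m ≤ n) :
    xseq cs x ω ι n = xseq cs x ω ι m * cs.wordProd ((ω.take (ι n)).drop (ι m)) := by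
  have : (ι m : ℕ) ≤ ι n := hι hmn
  rw [xseq, xseq, mul_assoc, ← cs.wordProd_append]
  congr 2
  nth_rw 1 [← List.take_append_drop (ι m : ℕ) (ω.take (ι n)), List.take_take, min_eq_left this]

end Sequences

section Length

variable {M : CoxeterMatrix B} (cs : CoxeterSystem M W)

theorem length_wordProd_mod_two (ω : List B) :
    cs.length (cs.wordProd ω) % 2 = ω.length % 2 := by
  induction ω with
  | nil => simp
  | cons i ω ih =>
    rw [cs.wordProd_cons, cs.length_mul_mod_two, cs.length_simple, List.length_cons]
    omega

theorem not_isRightDescent_of_isReduced_concat {ω : List B} {i : B}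
    (h : cs.IsReduced (ω.concat i)) : ¬ cs.IsRightDescent (cs.wordProd ω) i := by
  have := cs.length_wordProd_le ω
  rw [CoxeterSystem.IsReduced, cs.wordProd_concat, List.length_concat] at h
  rw [CoxeterSystem.IsRightDescent, h]
  omega

theorem wordProd_alternatingWord_succ_inv (i j : B) (q : ℕ) :
    (cs.wordProd (alternatingWord i j (q + 1)))⁻¹ =
      (cs.wordProd (alternatingWord i j q))⁻¹ * cs.simple (if Even q then j else i) := by
  rw [CoxeterSystem.alternatingWord_succ', cs.wordProd_cons, mul_inv_rev, cs.inv_simple]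

theorem length_le_length_mul_alternatingWord_inv (w : W) (i j : B) (q : ℕ) :
    cs.length w ≤ cs.length (w * (cs.wordProd (alternatingWord i j q))⁻¹) + q := by
  have := cs.length_wordProd_le (alternatingWord i j q)
  have := cs.length_le_length_mul_add_right w (cs.wordProd (alternatingWord i j q))⁻¹
  rw [cs.length_inv, CoxeterSystem.length_alternatingWord] at *
  omega

/-- `q` is taken maximal, which forces both `s_i` and `s_j` to be ascents of `v`. -/
theorem exists_mul_alternatingWord {w : W} (i : B) {j : B} (hj : cs.IsRightDescent w j) :
    ∃ v q, w = v * cs.wordProd (alternatingWord i j q) ∧ cs.length v + q = cs.length w ∧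
      0 < q ∧ ¬ cs.IsRightDescent v i ∧ ¬ cs.IsRightDescent v j := by
  let C q := cs.length (w * (cs.wordProd (alternatingWord i j q))⁻¹) + q ≤ cs.length w
  have hC1 : C 1 := by
    simp only [C, show alternatingWord i j 1 = [j] from rfl, cs.wordProd_singleton,
      cs.inv_simple]
    exact hj
  set q := Nat.findGreatest C (cs.length w)
  have hCq : C q := Nat.findGreatest_spec (m := 1) (by unfold C at hC1; omega) hC1
  have hq : 1 ≤ q := Nat.le_findGreatest (by unfold C at hC1; omega) hC1
  have hCq' : ¬ C (q + 1) := fun h =>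
    Nat.findGreatest_is_greatest (Nat.lt_succ_self q) (by unfold C at h; omega) h
  set v := w * (cs.wordProd (alternatingWord i j q))⁻¹ with hv
  have hlen : cs.length v + q = cs.length w :=
    le_antisymm hCq (length_le_length_mul_alternatingWord_inv cs w i j q)
  have hnext : ¬ cs.IsRightDescent v (if Even q then j else i) := by
    intro h
    apply hCq'
    simp only [C, wordProd_alternatingWord_succ_inv, ← mul_assoc, ← hv]
    unfold CoxeterSystem.IsRightDescent at h
    omega
  obtain ⟨q', hq'⟩ : ∃ q', q = q' + 1 := ⟨q - 1, by omega⟩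
  have hfirst : ¬ cs.IsRightDescent v (if Even q' then j else i) := by
    unfold CoxeterSystem.IsRightDescent
    have := length_le_length_mul_alternatingWord_inv cs w i j q'
    simp only [v, hq', wordProd_alternatingWord_succ_inv, ← mul_assoc,
      cs.simple_mul_simple_cancel_right] at hlen ⊢
    omega
  refine ⟨v, q, (inv_mul_cancel_right _ _).symm, hlen, hq, ?_, ?_⟩ <;>
    rcases Nat.even_or_odd q' with h | h <;>
    simp_all [Nat.even_add_one, ← Nat.not_even_iff_odd]

theorem lt_of_not_isRightDescent_mul_alternatingWord {v : W} {i j : B} {q : ℕ} (hm : M i j ≠ 0)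
    (hlen : cs.length v + q = cs.length (v * cs.wordProd (alternatingWord i j q)))
    (hi : ¬ cs.IsRightDescent (v * cs.wordProd (alternatingWord i j q)) i) : q < M i j := by
  by_contra! hq
  -- `(alternatingWord i j q).concat i = alternatingWord j i (q + 1)` is then longer than `m`,
  -- hence not reduced, and by parity its length is at most `q - 1`.
  have hred : ¬ cs.IsReduced (alternatingWord j i (q + 1)) :=
    cs.not_isReduced_alternatingWord j i (M.symmetric i j ▸ hm) (by rw [M.symmetric]; omega)
  have hpar := length_wordProd_mod_two cs (alternatingWord j i (q + 1))
  have hle := cs.length_wordProd_le (alternatingWord j i (q + 1))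
  have hmul : cs.length (v * cs.wordProd (alternatingWord i j q) * cs.simple i) ≤
      cs.length v + cs.length (cs.wordProd (alternatingWord j i (q + 1))) := by
    rw [mul_assoc, ← cs.wordProd_concat]
    exact cs.length_mul_le _ _
  unfold CoxeterSystem.IsReduced at hred
  unfold CoxeterSystem.IsRightDescent at hi
  simp only [CoxeterSystem.length_alternatingWord] at hpar hle hred
  omega

theorem not_isRightDescent_drop_take {ω : List B} (hred : cs.IsReduced ω) {a b : ℕ}
    (hab : a ≤ b) (hb : b < ω.length) :
    ¬ cs.IsRightDescent (cs.wordProd ((ω.take b).drop a)) ω[b] := by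
  apply not_isRightDescent_of_isReduced_concat
  have : ((ω.take b).drop a).concat ω[b] = (ω.take (b + 1)).drop a := by
    rw [List.take_succ_eq_append_getElem hb, List.drop_append_of_le_length (by simp; omega),
      List.concat_eq_append]
  rw [this]
  exact (hred.take _).drop _

end Length

/-- `m = 0` encodes `m = ∞`, where `sin (k π / m) / sin (π / m)` tends to `k`. -/
def dihedralCoeff (m k : ℕ) : ℝ :=
  if m = 0 then k else Real.sin (k * (Real.pi / m)) / Real.sin (Real.pi / m)

theorem sin_pi_div_pos {m : ℕ} (hm : 2 ≤ m) : 0 < Real.sin (Real.pi / m) := by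
  apply Real.sin_pos_of_pos_of_lt_pi (by positivity)
  rw [div_lt_iff₀ (by positivity)]
  have : (2 : ℝ) ≤ m := by exact_mod_cast hm
  nlinarith [Real.pi_pos]

theorem dihedralCoeff_zero (m : ℕ) : dihedralCoeff m 0 = 0 := by
  simp [dihedralCoeff]

theorem dihedralCoeff_one {m : ℕ} (hm : m ≠ 1) : dihedralCoeff m 1 = 1 := by
  unfold dihedralCoeff
  split_ifs with h
  · simp
  · simpa using div_self (sin_pi_div_pos (by omega : 2 ≤ m)).ne'

theorem dihedralCoeff_nonneg {m k : ℕ} (hm : m ≠ 1) (hk : m = 0 ∨ k ≤ m) :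
    0 ≤ dihedralCoeff m k := by
  unfold dihedralCoeff
  split_ifs with h
  · positivity
  · have hkm : (k : ℝ) ≤ m := by exact_mod_cast hk.resolve_left h
    refine div_nonneg (Real.sin_nonneg_of_nonneg_of_le_pi (by positivity) ?_)
      (sin_pi_div_pos (by omega)).le
    calc (k : ℝ) * (Real.pi / m) ≤ m * (Real.pi / m) := by gcongr
      _ = Real.pi := by field_simp

/-- The three-term recursion `sin ((k+2)θ) = 2 cos θ sin ((k+1)θ) - sin (kθ)`, with
`cos θ = -B(α_i, α_j)`. -/
theorem dihedralCoeff_add_two {M : CoxeterMatrix B} {i j : B} (hij : i ≠ j) (k : ℕ) :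
    dihedralCoeff (M i j) (k + 2) =
      -2 * cB M i j * dihedralCoeff (M i j) (k + 1) - dihedralCoeff (M i j) k := by
  unfold dihedralCoeff cB
  split_ifs with h
  · push_cast; ring
  · have hs := (sin_pi_div_pos (show 2 ≤ M i j by have := M.off_diagonal i j hij; omega)).ne'
    set θ := Real.pi / (M i j : ℝ)
    have h2 : ((k : ℝ) + 2) * θ = ((k : ℝ) + 1) * θ + θ := by ring
    have h0 : (k : ℝ) * θ = ((k : ℝ) + 1) * θ - θ := by ring
    push_cast
    rw [h2, h0, Real.sin_add, Real.sin_sub]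
    field_simp
    ring

theorem cB_self (M : CoxeterMatrix B) (i : B) : cB M i i = 1 := by
  simp [cB]

theorem cB_comm (M : CoxeterMatrix B) (i j : B) : cB M i j = cB M j i := by
  rw [cB, cB, M.symmetric]

section GeometricRepresentation

variable [Fintype B] [DecidableEq B] {M : CoxeterMatrix B} {cs : CoxeterSystem M W}
  {ρ : W →* (B → ℝ) ≃ₗ[ℝ] (B → ℝ)}

theorem bform_sroot_sroot (i j : B) : bform M (sroot i) (sroot j) = cB M i j := by
  simp [bform, sroot, Pi.single_apply]

theorem rho_simple_sroot (hρ : IsGeomRep M cs ρ) (i j : B) :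
    ρ (cs.simple i) (sroot j) = sroot j - (2 * cB M i j) • sroot i := by
  rw [hρ, bform_sroot_sroot]

theorem rho_simple_sroot_self (hρ : IsGeomRep M cs ρ) (i : B) :
    ρ (cs.simple i) (sroot i) = -sroot i := by
  rw [rho_simple_sroot hρ, cB_self]
  module

theorem rho_alternatingWord_sroot (hρ : IsGeomRep M cs ρ) {i j : B} (hij : i ≠ j) (r : ℕ) :
    ρ (cs.wordProd (alternatingWord i j r)) (sroot i) =
      dihedralCoeff (M i j) (if Even r then r + 1 else r) • sroot i +
        dihedralCoeff (M i j) (if Even r then r else r + 1) • sroot j := by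
  have hm := M.off_diagonal i j hij
  induction r with
  | zero =>
    simp [CoxeterSystem.alternatingWord, dihedralCoeff_zero, dihedralCoeff_one hm]
  | succ r ih =>
    rw [CoxeterSystem.alternatingWord_succ', cs.wordProd_cons, map_mul, LinearEquiv.mul_apply,
      ih]
    rcases Nat.even_or_odd r with hr | hr
    · simp only [hr, if_true, Nat.even_add_one, not_true_eq_false, if_false, map_add, map_smul,
        rho_simple_sroot hρ, dihedralCoeff_add_two hij, cB_self, cB_comm M j i]
      module
    · simp only [← Nat.not_even_iff_odd] at hr
      simp only [hr, if_false, Nat.even_add_one, not_false_eq_true, if_true, map_add, map_smul,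
        rho_simple_sroot hρ, dihedralCoeff_add_two hij, cB_self]
      module

theorem rho_sroot_nonneg (hρ : IsGeomRep M cs ρ) {w : W} {i : B}
    (hi : ¬ cs.IsRightDescent w i) : 0 ≤ ρ w (sroot i) := by
  induction hL : cs.length w using Nat.strong_induction_on generalizing w i with
  | _ L ih =>
  rcases eq_or_ne w 1 with rfl | hw
  · simp [sroot]
  obtain ⟨j, hj⟩ := cs.exists_rightDescent_of_ne_one hw
  have hij : i ≠ j := fun h => hi (h ▸ hj)
  obtain ⟨v, q, rfl, hlen, hq, hvi, hvj⟩ := exists_mul_alternatingWord cs i hj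
  have hcoeff : ∀ k ≤ q + 1, 0 ≤ dihedralCoeff (M i j) k := fun k hk =>
    dihedralCoeff_nonneg (M.off_diagonal i j hij) <| (em (M i j = 0)).imp_right fun hm => by
      have := lt_of_not_isRightDescent_mul_alternatingWord cs hm hlen hi
      omega
  rw [map_mul, LinearEquiv.mul_apply, rho_alternatingWord_sroot hρ hij, map_add, map_smul,
    map_smul]
  exact add_nonneg (smul_nonneg (hcoeff _ (by split <;> omega)) (ih _ (by omega) hvi rfl))
    (smul_nonneg (hcoeff _ (by split <;> omega)) (ih _ (by omega) hvj rfl))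

theorem rho_sroot_nonpos (hρ : IsGeomRep M cs ρ) {w : W} {i : B}
    (hi : cs.IsRightDescent w i) : ρ w (sroot i) ≤ 0 := by
  have := rho_sroot_nonneg hρ (cs.isRightDescent_iff_not_isRightDescent_mul.mp hi)
  rwa [map_mul, LinearEquiv.mul_apply, rho_simple_sroot_self hρ, map_neg, neg_nonneg] at this

end GeometricRepresentation

section Chambers

variable [Fintype B] [DecidableEq B] {ρ π : W →* (B → ℝ) ≃ₗ[ℝ] (B → ℝ)}

theorem pair_sroot (f : B → ℝ) (i : B) : pair f (sroot i) = f i := by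
  simp [pair, sroot, Pi.single_apply]

theorem pair_pos_of_mem_domCham {f v : B → ℝ} (hf : f ∈ domCham B) (hv : 0 ≤ v)
    (hv0 : v ≠ 0) : 0 < pair f v := by
  have hfpos : ∀ i, 0 < f i := fun i => pair_sroot f i ▸ hf i
  obtain ⟨i, hi⟩ := Function.ne_iff.mp hv0
  exact Finset.sum_pos' (fun j _ => mul_nonneg (hfpos j).le (hv j))
    ⟨i, Finset.mem_univ i, mul_pos (hfpos i) ((hv i).lt_of_ne' hi)⟩

theorem pair_pos_of_mem_cham (hπ : IsContraRep ρ π) {w : W} {f v : B → ℝ}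
    (hf : f ∈ cham π w) (hv : 0 ≤ v) (hv0 : v ≠ 0) : 0 < pair f (ρ w v) := by
  obtain ⟨g, hg, rfl⟩ := hf
  rw [hπ]
  exact pair_pos_of_mem_domCham hg hv hv0

theorem pair_neg_of_mem_cham (hπ : IsContraRep ρ π) {w : W} {f v : B → ℝ}
    (hf : f ∈ cham π w) (hv : v ≤ 0) (hv0 : v ≠ 0) : pair f (ρ w v) < 0 := by
  have := pair_pos_of_mem_cham hπ hf (neg_nonneg.mpr hv) (neg_ne_zero.mpr hv0)
  simpa [pair] using this

end Chambers

theorem sepSets_of_pos_of_neg [Fintype B] {α : B → ℝ} {A A' : Set (B → ℝ)}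
    (hA : ∀ f ∈ A, 0 < pair f α) (hA' : ∀ f ∈ A', pair f α < 0) : SepSets α A A' :=
  ⟨fun f hf => hf.elim (fun hf => (hA f hf).ne') (fun hf => (hA' f hf).ne),
    fun f hf g hg => mul_neg_of_pos_of_neg (hA f hf) (hA' g hg)⟩

/-- for `1 ≤ n ≤ p`, the hyperplane `H_n` separates the chambers `x₁C`
and `e_{n−1}C`. -/
theorem statement12 [Fintype B] [DecidableEq B] {M : CoxeterMatrix B}
    (cs : CoxeterSystem M W) (ρ π : W →* (B → ℝ) ≃ₗ[ℝ] (B → ℝ))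
    (hρ : IsGeomRep M cs ρ) (hπ : IsContraRep ρ π)
    (x : W) (ω : List B) (hred : cs.IsReduced ω)
    (p : ℕ) (ι : Fin p → Fin ω.length) (hι : StrictMono ι)
    (hdesc : DescCond cs x ω ι)
    (n : ℕ) (hn1 : 1 ≤ n) (hnp : n ≤ p) :
    SepSets (rootseq cs ρ x ω ι ⟨n - 1, by omega⟩)
      (cham π (xseq cs x ω ι ⟨0, by omega⟩))
      (cham π (eseq cs x ω ι (n - 1))) := by
  set first : Fin p := ⟨0, by omega⟩
  set last : Fin p := ⟨n - 1, by omega⟩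
  have hle : first ≤ last := Fin.mk_le_mk.mpr (Nat.zero_le _)
  have hα : sroot (ω.get (ι last)) ≠ 0 := by simp [sroot]
  have hfirst : xseq cs x ω ι last =
      xseq cs x ω ι first * cs.wordProd ((ω.take (ι last)).drop (ι first)) :=
    xseq_eq_xseq_mul cs x ω ι hι.monotone hle
  have hlast : xseq cs x ω ι last = eseq cs x ω ι (n - 1) * omitProd cs x ω ι last := by
    rw [← eseq_inv_mul_xseq cs x ω ι hι last, mul_inv_cancel_left]
  refine sepSets_of_pos_of_neg (fun f hf => ?_) (fun f hf => ?_)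
  · rw [rootseq, hfirst, map_mul, LinearEquiv.mul_apply]
    exact pair_pos_of_mem_cham hπ hf
      (rho_sroot_nonneg hρ (not_isRightDescent_drop_take cs hred (hι.monotone hle) _))
      ((ρ _).map_ne_zero_iff.mpr hα)
  · rw [rootseq, hlast, map_mul, LinearEquiv.mul_apply]
    exact pair_neg_of_mem_cham hπ hf (rho_sroot_nonpos hρ (hdesc last))
      ((ρ _).map_ne_zero_iff.mpr hα)

end PaperBound
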